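/- arXiv:math/0112251 — 2 statements merged into one kernel-verified Lean document; each statement's English description precedes it below -/
import Mathlib

section
/- Let Δ^P ⊆ Δ, let λ ∈ V be dominant, let w ∈ W_P, and set μ := w(λ + ρ) − ρ. Let s be any element of the subgroup of W generated by the reflections s_γ for those γ ∈ Φ^P with ⟨μ, γ∨⟩ = 0. Then s(Φ_w) = Φ_w and s(wλ) = wλ. -/
/-!
It suffices to treat one generator `s_γ`, and replacing `γ` by `-γ` we may take
`γ ∈ Φ^P ∩ Φ⁺` with `⟨μ, γ⟩ = 0`. As `w ∈ W_P`, `w⁻¹γ` is positive, so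
`⟨wλ, γ⟩ = ⟨λ, w⁻¹γ⟩ ≥ 0` by dominance. Since `wρ = ρ - ∑_{β ∈ Φ_w} β`, the condition
`⟨μ, γ⟩ = 0` reads `⟨wλ, γ⟩ = ∑_{β ∈ Φ_w} ⟨β, γ⟩`. Every `β ∈ Φ_w` with `⟨β, γ⟩ ≥ 0` is
mapped by `s_γ` into `Φ_w`, where the pairing changes sign; so in the sum the
`s_γ`-stable part cancels and what is left is a sum of negative terms. Hence
`⟨wλ, γ⟩ = 0` and nothing is left: `s_γ` permutes `Φ_w` and fixes `wλ`.
-/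

noncomputable section

open scoped RealInnerProductSpace

variable {V : Type*} [NormedAddCommGroup V] [InnerProductSpace ℝ V] [FiniteDimensional ℝ V]

/-- The reflection in the vector `γ` (as a function). -/
def sRefl (γ v : V) : V := v - (2 * ⟪v, γ⟫ / ⟪γ, γ⟫) • γ

/-- The coroot `γ∨ = 2γ/⟨γ,γ⟩` of `γ`. -/
def coroot (γ : V) : V := (2 / ⟪γ, γ⟫) • γ

/-- The Weyl group `W`: the subgroup of linear automorphisms generated by the
reflections in the roots. -/
def weylGroup (Φ : Finset V) : Subgroup (V ≃ₗ[ℝ] V) :=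
  Subgroup.closure {w : V ≃ₗ[ℝ] V | ∃ γ ∈ Φ, ∀ v, w v = sRefl γ v}

/-- `Φ_w = {γ ∈ Φ⁺ : w⁻¹ γ ∈ −Φ⁺}`. -/
def inversions (Φpos : Finset V) (w : V ≃ₗ[ℝ] V) : Set V :=
  {γ | γ ∈ Φpos ∧ -(w.symm γ) ∈ Φpos}

/-- `ℓ(w) = #Φ_w`. -/
def len (Φpos : Finset V) (w : V ≃ₗ[ℝ] V) : ℕ := (inversions Φpos w).ncard

/-- `Φ^P = Φ ∩ span(Δ^P)`. -/
def levi (Φ ΔP : Finset V) : Set V :=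
  {γ | γ ∈ Φ ∧ γ ∈ Submodule.span ℝ (ΔP : Set V)}

/-- `W_P = {w ∈ W : Φ_w ∩ Φ^P = ∅}`, the minimal length coset representatives of `W^P\W`. -/
def minimalCosetReps (Φ Φpos ΔP : Finset V) : Set (V ≃ₗ[ℝ] V) :=
  {w | w ∈ weylGroup Φ ∧ inversions Φpos w ∩ levi Φ ΔP = ∅}

/-- `pr_S`: the orthogonal projection onto the orthogonal complement of `span S`. -/
def pr (S : Set V) (v : V) : V :=
  (Submodule.orthogonalProjection (Submodule.span ℝ S)ᗮ v : V)

/-- `Φ` is a finite (possibly non-reduced) root system spanning `V`, with base `Δ`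
and associated positive system `Φpos`. -/
structure IsRootBase (Φ Δ Φpos : Finset V) : Prop where
  span_top : Submodule.span ℝ (Φ : Set V) = ⊤
  zero_not_mem : (0 : V) ∉ Φ
  refl_mem : ∀ γ ∈ Φ, ∀ δ ∈ Φ, sRefl γ δ ∈ Φ
  base_subset_pos : (Δ : Set V) ⊆ (Φpos : Set V)
  pos_subset : (Φpos : Set V) ⊆ (Φ : Set V)
  mem_or_neg_mem : ∀ γ ∈ Φ, γ ∈ Φpos ∨ -γ ∈ Φpos
  not_mem_and_neg_mem : ∀ γ ∈ Φpos, -γ ∉ Φpos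
  indep : LinearIndependent ℝ (fun x : (Δ : Set V) => (x : V))
  pos_comb : ∀ γ ∈ Φpos, ∃ c : V → ℝ, (∀ α ∈ Δ, 0 ≤ c α) ∧ γ = ∑ α ∈ Δ, c α • α

open Finset

section Involution

variable {ι M : Type*} [DecidableEq ι] {S : Finset ι} {σ : ι → ι} {f : ι → M}

theorem Finset.sum_eq_sum_filter_of_involutive [AddCommGroup M] [IsAddTorsionFree M]
    (hσ : σ.Involutive) (hf : ∀ x, f (σ x) = -f x) :
    ∑ x ∈ S, f x = ∑ x ∈ S with σ x ∉ S, f x := by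
  have hstable : ∑ x ∈ S with σ x ∈ S, f x = 0 := by
    refine sum_involution (fun x _ => σ x) (fun x _ => by rw [hf, add_neg_cancel])
      (fun x _ hx hfix => hx (self_eq_neg.mp (by rw [← hf, hfix]))) (fun x hx => ?_)
      (fun x _ => hσ x)
    simp only [mem_filter] at hx ⊢
    exact ⟨hx.2, by rw [hσ x]; exact hx.1⟩
  rw [← sum_filter_add_sum_filter_not S (fun x => σ x ∈ S), hstable, zero_add]

variable [AddCommGroup M] [LinearOrder M] [IsOrderedAddMonoid M]

theorem Finset.sum_nonpos_of_involutive (hσ : σ.Involutive) (hf : ∀ x, f (σ x) = -f x)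
    (hS : ∀ x ∈ S, 0 ≤ f x → σ x ∈ S) : ∑ x ∈ S, f x ≤ 0 := by
  rw [sum_eq_sum_filter_of_involutive hσ hf]
  refine sum_nonpos fun x hx => ?_
  rw [mem_filter] at hx
  exact le_of_lt (not_le.mp fun h => hx.2 (hS x hx.1 h))

theorem Finset.mapsTo_of_involutive_of_sum_nonneg (hσ : σ.Involutive)
    (hf : ∀ x, f (σ x) = -f x) (hS : ∀ x ∈ S, 0 ≤ f x → σ x ∈ S)
    (hsum : 0 ≤ ∑ x ∈ S, f x) : Set.MapsTo σ S S := by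
  intro x hx
  by_contra hσx
  have hneg : ∑ x ∈ S with σ x ∉ S, f x < 0 :=
    sum_neg (fun y hy => by
      rw [mem_filter] at hy
      exact not_le.mp fun h => hy.2 (hS y hy.1 h)) ⟨x, mem_filter.mpr ⟨hx, hσx⟩⟩
  rw [sum_eq_sum_filter_of_involutive hσ hf] at hsum
  exact hsum.not_gt hneg

end Involution

section Reflection

variable {V : Type*} [NormedAddCommGroup V] [InnerProductSpace ℝ V]

theorem inner_sRefl_self (γ v : V) : ⟪sRefl γ v, γ⟫ = -⟪v, γ⟫ := by
  rcases eq_or_ne γ 0 with rfl | hγ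
  · simp
  have hγγ : ⟪γ, γ⟫ ≠ 0 := inner_self_ne_zero.mpr hγ
  rw [sRefl, inner_sub_left, real_inner_smul_left]
  field_simp
  ring

theorem sRefl_involutive (γ : V) : (sRefl γ).Involutive := fun v => by
  rw [sRefl, inner_sRefl_self, sRefl, mul_neg, neg_div, neg_smul]
  abel

theorem sRefl_of_inner_eq_zero {γ v : V} (h : ⟪v, γ⟫ = 0) : sRefl γ v = v := by
  simp [sRefl, h]

theorem sRefl_neg (γ v : V) : sRefl (-γ) v = sRefl γ v := by
  simp only [sRefl, inner_neg_left, inner_neg_right, neg_neg, mul_neg, neg_div, neg_smul, smul_neg]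

theorem inner_sRefl_sRefl (γ a b : V) : ⟪sRefl γ a, sRefl γ b⟫ = ⟪a, b⟫ := by
  rcases eq_or_ne γ 0 with rfl | hγ
  · simp [sRefl]
  have hγγ : ⟪γ, γ⟫ ≠ 0 := inner_self_ne_zero.mpr hγ
  simp only [sRefl, inner_sub_left, inner_sub_right, real_inner_smul_left,
    real_inner_smul_right, real_inner_comm b γ]
  field_simp
  ring

theorem map_sRefl (F : V →ₗ[ℝ] ℝ) (γ v : V) :
    F (sRefl γ v) = F v - 2 * ⟪v, γ⟫ / ⟪γ, γ⟫ * F γ := by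
  rw [sRefl, map_sub, map_smul, smul_eq_mul]

theorem real_inner_coroot (v γ : V) : ⟪v, coroot γ⟫ = 2 / ⟪γ, γ⟫ * ⟪v, γ⟫ :=
  real_inner_smul_right _ _ _

theorem inner_coroot_nonneg_iff {γ : V} (hγ : γ ≠ 0) (v : V) :
    0 ≤ ⟪v, coroot γ⟫ ↔ 0 ≤ ⟪v, γ⟫ := by
  have : 0 < 2 / ⟪γ, γ⟫ := div_pos two_pos (real_inner_self_pos.mpr hγ)
  rw [real_inner_coroot, mul_nonneg_iff_of_pos_left this]

theorem inner_coroot_eq_zero_iff {γ : V} (hγ : γ ≠ 0) (v : V) :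
    ⟪v, coroot γ⟫ = 0 ↔ ⟪v, γ⟫ = 0 := by
  have : 2 / ⟪γ, γ⟫ ≠ 0 := div_ne_zero two_ne_zero (inner_self_ne_zero.mpr hγ)
  rw [real_inner_coroot, mul_eq_zero, or_iff_right this]

theorem inner_apply_apply_of_mem_weylGroup {Φ : Finset V} {w : V ≃ₗ[ℝ] V}
    (hw : w ∈ weylGroup Φ) (a b : V) : ⟪w a, w b⟫ = ⟪a, b⟫ := by
  induction hw using Subgroup.closure_induction generalizing a b with
  | mem u hu =>
    obtain ⟨γ, -, hu⟩ := hu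
    rw [hu, hu, inner_sRefl_sRefl]
  | one => rfl
  | mul x y _ _ hx hy => exact (hx _ _).trans (hy _ _)
  | inv x _ hx =>
    calc ⟪x.symm a, x.symm b⟫ = ⟪x (x.symm a), x (x.symm b)⟫ := (hx _ _).symm
      _ = ⟪a, b⟫ := by simp only [LinearEquiv.apply_symm_apply]

theorem apply_mem_iff_of_mem_weylGroup {Φ : Finset V}
    (hΦ : ∀ γ ∈ Φ, ∀ δ ∈ Φ, sRefl γ δ ∈ Φ) {w : V ≃ₗ[ℝ] V} (hw : w ∈ weylGroup Φ) (δ : V) :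
    w δ ∈ Φ ↔ δ ∈ Φ := by
  induction hw using Subgroup.closure_induction generalizing δ with
  | mem u hu =>
    obtain ⟨γ, hγ, hu⟩ := hu
    rw [hu]
    refine ⟨fun hδ => ?_, hΦ γ hγ δ⟩
    simpa only [sRefl_involutive γ δ] using hΦ γ hγ _ hδ
  | one => rfl
  | mul x y _ _ hx hy => exact (hx _).trans (hy _)
  | inv x _ hx =>
    calc x.symm δ ∈ Φ ↔ x (x.symm δ) ∈ Φ := (hx _).symm
      _ ↔ δ ∈ Φ := by rw [LinearEquiv.apply_symm_apply]

end Reflection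

namespace IsRootBase

variable {V : Type*} [NormedAddCommGroup V] [InnerProductSpace ℝ V] {Φ Δ Φpos : Finset V}

theorem ne_zero_of_mem (h : IsRootBase Φ Δ Φpos) {δ : V} (hδ : δ ∈ Φ) : δ ≠ 0 :=
  fun h0 => h.zero_not_mem (h0 ▸ hδ)

theorem span_base_eq_top (h : IsRootBase Φ Δ Φpos) : Submodule.span ℝ (Δ : Set V) = ⊤ := by
  have hpos : ∀ δ ∈ Φpos, δ ∈ Submodule.span ℝ (Δ : Set V) := fun δ hδ => by
    obtain ⟨c, -, rfl⟩ := h.pos_comb δ hδ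
    exact Submodule.sum_smul_mem _ _ fun α hα => Submodule.subset_span hα
  rw [eq_top_iff, ← h.span_top, Submodule.span_le]
  intro γ hγ
  rcases h.mem_or_neg_mem γ hγ with hp | hn
  · exact hpos γ hp
  · simpa using Submodule.neg_mem _ (hpos _ hn)

theorem exists_relHeight (h : IsRootBase Φ Δ Φpos) {S : Finset V} (hS : S ⊆ Δ) :
    ∃ F : V →ₗ[ℝ] ℝ, (∀ v ∈ Submodule.span ℝ (S : Set V), F v = 0) ∧
      ∀ δ ∈ Φpos, 0 ≤ F δ ∧ (δ ∉ Submodule.span ℝ (S : Set V) → 0 < F δ) := by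
  classical
  let b : Module.Basis (Δ : Set V) ℝ V :=
    .mk h.indep (by rw [Subtype.range_coe, h.span_base_eq_top])
  let F : V →ₗ[ℝ] ℝ := b.constr ℝ fun α => if (α : V) ∈ S then 0 else 1
  have hF : ∀ α ∈ Δ, F α = if α ∈ S then 0 else 1 := fun α hα => by
    have := b.constr_basis ℝ (fun α => if (α : V) ∈ S then (0 : ℝ) else 1) ⟨α, hα⟩
    rwa [Module.Basis.mk_apply] at this
  refine ⟨F, fun v hv => ?_, fun δ hδ => ?_⟩
  · refine (Submodule.span_le (p := LinearMap.ker F)).mpr (fun α hα => ?_) hv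
    simp [hF α (hS hα), Finset.mem_coe.mp hα]
  obtain ⟨c, hc, rfl⟩ := h.pos_comb δ hδ
  have hterm : ∀ α ∈ Δ, F (c α • α) = if α ∈ S then 0 else c α := fun α hα => by
    rw [map_smul, hF α hα, smul_eq_mul]
    split_ifs <;> simp
  have hnonneg : ∀ α ∈ Δ, 0 ≤ F (c α • α) := fun α hα => by
    rw [hterm α hα]
    split_ifs
    exacts [le_rfl, hc α hα]
  refine ⟨map_sum F _ Δ ▸ sum_nonneg hnonneg, fun hnot => ?_⟩
  rw [map_sum]
  refine sum_pos' hnonneg ?_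
  by_contra! hzero
  refine hnot (Submodule.sum_mem _ fun α hα => ?_)
  by_cases hαS : α ∈ S
  · exact Submodule.smul_mem _ _ (Submodule.subset_span hαS)
  · have : c α = 0 := le_antisymm (by simpa [hterm α hα, hαS] using hzero α hα) (hc α hα)
    simp [this]

theorem exists_pos_linearMap (h : IsRootBase Φ Δ Φpos) :
    ∃ G : V →ₗ[ℝ] ℝ, ∀ δ ∈ Φpos, 0 < G δ := by
  obtain ⟨G, -, hG⟩ := h.exists_relHeight (empty_subset Δ)
  refine ⟨G, fun δ hδ => (hG δ hδ).2 ?_⟩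
  simpa using h.ne_zero_of_mem (h.pos_subset hδ)

theorem mem_pos_of_map_pos (h : IsRootBase Φ Δ Φpos) {F : V →ₗ[ℝ] ℝ}
    (hF : ∀ δ ∈ Φpos, 0 ≤ F δ) {δ : V} (hδ : δ ∈ Φ) (hFδ : 0 < F δ) : δ ∈ Φpos :=
  (h.mem_or_neg_mem δ hδ).resolve_right fun hn => by
    have := hF _ hn
    rw [map_neg] at this
    linarith

theorem neg_mem_pos_of_map_neg (h : IsRootBase Φ Δ Φpos) {F : V →ₗ[ℝ] ℝ}
    (hF : ∀ δ ∈ Φpos, 0 ≤ F δ) {δ : V} (hδ : δ ∈ Φ) (hFδ : F δ < 0) : -δ ∈ Φpos :=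
  (h.mem_or_neg_mem δ hδ).resolve_left fun hp => (hF δ hp).not_gt hFδ

theorem inner_nonneg_of_dominant (h : IsRootBase Φ Δ Φpos) {lam : V}
    (hdom : ∀ α ∈ Δ, 0 ≤ ⟪lam, coroot α⟫) {δ : V} (hδ : δ ∈ Φpos) : 0 ≤ ⟪lam, δ⟫ := by
  obtain ⟨c, hc, rfl⟩ := h.pos_comb δ hδ
  rw [inner_sum]
  refine sum_nonneg fun α hα => ?_
  have hα0 := h.ne_zero_of_mem (h.pos_subset (h.base_subset_pos hα))
  rw [real_inner_smul_right]
  exact mul_nonneg (hc α hα) ((inner_coroot_nonneg_iff hα0 lam).mp (hdom α hα))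

end IsRootBase

section Inversions

variable {V : Type*} [NormedAddCommGroup V] [InnerProductSpace ℝ V] {Φ Δ Φpos : Finset V}
  {w : V ≃ₗ[ℝ] V}

open Classical in
def inversionFinset (Φpos : Finset V) (w : V ≃ₗ[ℝ] V) : Finset V :=
  {β ∈ Φpos | -(w.symm β) ∈ Φpos}

theorem coe_inversionFinset (Φpos : Finset V) (w : V ≃ₗ[ℝ] V) :
    (inversionFinset Φpos w : Set V) = inversions Φpos w := by
  ext β
  simp [inversionFinset, inversions]

theorem mem_inversionFinset {β : V} :
    β ∈ inversionFinset Φpos w ↔ β ∈ Φpos ∧ -(w.symm β) ∈ Φpos := by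
  simp [inversionFinset]

open Classical in
theorem sum_filter_apply_mem_pos (h : IsRootBase Φ Δ Φpos) (hw : w ∈ weylGroup Φ) :
    ∑ δ ∈ Φpos with w δ ∈ Φpos, w δ = ∑ β ∈ Φpos \ inversionFinset Φpos w, β := by
  refine sum_nbij' w w.symm (fun δ hδ => ?_) (fun β hβ => ?_) (fun δ _ => w.symm_apply_apply δ)
    (fun β _ => w.apply_symm_apply β) (fun _ _ => rfl)
  · rw [mem_filter] at hδ
    rw [mem_sdiff, mem_inversionFinset, w.symm_apply_apply]
    exact ⟨hδ.2, fun hinv => h.not_mem_and_neg_mem δ hδ.1 hinv.2⟩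
  · rw [mem_sdiff, mem_inversionFinset] at hβ
    have hroot : w.symm β ∈ Φ :=
      (apply_mem_iff_of_mem_weylGroup h.refl_mem (inv_mem hw) β).mpr (h.pos_subset hβ.1)
    rw [mem_filter, w.apply_symm_apply]
    exact ⟨(h.mem_or_neg_mem _ hroot).resolve_right fun hn => hβ.2 ⟨hβ.1, hn⟩, hβ.1⟩

open Classical in
theorem sum_filter_apply_notMem_pos (h : IsRootBase Φ Δ Φpos) (hw : w ∈ weylGroup Φ) :
    ∑ δ ∈ Φpos with w δ ∉ Φpos, w δ = -∑ β ∈ inversionFinset Φpos w, β := by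
  rw [← sum_neg_distrib]
  refine sum_nbij' (fun δ => -w δ) (fun β => -w.symm β) (fun δ hδ => ?_) (fun β hβ => ?_)
    (fun δ _ => by simp) (fun β _ => by simp) (fun δ _ => by simp)
  · rw [mem_filter] at hδ
    have hroot : w δ ∈ Φ :=
      (apply_mem_iff_of_mem_weylGroup h.refl_mem hw δ).mpr (h.pos_subset hδ.1)
    rw [mem_inversionFinset, map_neg, w.symm_apply_apply, neg_neg]
    exact ⟨(h.mem_or_neg_mem _ hroot).resolve_left hδ.2, hδ.1⟩
  · rw [mem_inversionFinset] at hβ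
    rw [mem_filter, map_neg, w.apply_symm_apply]
    exact ⟨hβ.2, h.not_mem_and_neg_mem β hβ.1⟩

theorem map_halfSum_pos (h : IsRootBase Φ Δ Φpos) (hw : w ∈ weylGroup Φ) :
    w ((2⁻¹ : ℝ) • ∑ γ ∈ Φpos, γ) =
      (2⁻¹ : ℝ) • ∑ γ ∈ Φpos, γ - ∑ β ∈ inversionFinset Φpos w, β := by
  classical
  have hsplit : ∑ β ∈ Φpos, β = ∑ β ∈ Φpos \ inversionFinset Φpos w, β +
      ∑ β ∈ inversionFinset Φpos w, β :=
    (sum_sdiff (filter_subset _ _)).symm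
  rw [map_smul, map_sum, ← sum_filter_add_sum_filter_not Φpos (fun δ => w δ ∈ Φpos),
    sum_filter_apply_mem_pos h hw, sum_filter_apply_notMem_pos h hw, hsplit]
  module

theorem inner_apply_eq_sum_inversionFinset (h : IsRootBase Φ Δ Φpos) (hw : w ∈ weylGroup Φ)
    {ρ lam γ : V} (hρ : ρ = (2⁻¹ : ℝ) • ∑ γ ∈ Φpos, γ) (hμγ : ⟪w (lam + ρ) - ρ, γ⟫ = 0) :
    ⟪w lam, γ⟫ = ∑ β ∈ inversionFinset Φpos w, ⟪β, γ⟫ := by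
  rw [map_add, hρ, map_halfSum_pos h hw] at hμγ
  simp only [inner_sub_left, inner_add_left, sum_inner] at hμγ
  linarith

end Inversions

section MinimalCosetReps

variable {V : Type*} [NormedAddCommGroup V] [InnerProductSpace ℝ V] {Φ Δ Φpos ΔP : Finset V}
  {w : V ≃ₗ[ℝ] V} {γ : V}

theorem symm_apply_mem_pos_of_mem_levi (h : IsRootBase Φ Δ Φpos) (hw : w ∈ weylGroup Φ)
    (hwP : inversions Φpos w ∩ levi Φ ΔP = ∅) (hγ : γ ∈ levi Φ ΔP) (hγpos : γ ∈ Φpos) :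
    w.symm γ ∈ Φpos := by
  have hroot : w.symm γ ∈ Φ :=
    (apply_mem_iff_of_mem_weylGroup h.refl_mem (inv_mem hw) γ).mpr hγ.1
  refine (h.mem_or_neg_mem _ hroot).resolve_right fun hn => ?_
  exact (Set.eq_empty_iff_forall_notMem.mp hwP) γ ⟨⟨hγpos, hn⟩, hγ⟩

theorem sRefl_mem_inversions (h : IsRootBase Φ Δ Φpos) (hΔP : ΔP ⊆ Δ)
    (hw : w ∈ weylGroup Φ) (hwP : inversions Φpos w ∩ levi Φ ΔP = ∅)
    (hγ : γ ∈ levi Φ ΔP) (hγpos : γ ∈ Φpos) {β : V} (hβ : β ∈ inversions Φpos w)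
    (hβγ : 0 < ⟪β, γ⟫) : sRefl γ β ∈ inversions Φpos w := by
  have hβΦ : β ∈ Φ := h.pos_subset hβ.1
  have hc : 0 < 2 * ⟪β, γ⟫ / ⟪γ, γ⟫ :=
    div_pos (by linarith) (real_inner_self_pos.mpr (h.ne_zero_of_mem hγ.1))
  have hroot : sRefl γ β ∈ Φ := h.refl_mem γ hγ.1 β hβΦ
  -- `F` only sees the coefficients outside `ΔP`, which `s_γ` leaves unchanged.
  obtain ⟨F, hF0, hF⟩ := h.exists_relHeight hΔP
  have hβF : 0 < F β := (hF β hβ.1).2 fun hspan =>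
    (Set.eq_empty_iff_forall_notMem.mp hwP) β ⟨hβ, hβΦ, hspan⟩
  have hpos : sRefl γ β ∈ Φpos := by
    refine h.mem_pos_of_map_pos (fun δ hδ => (hF δ hδ).1) hroot ?_
    rwa [map_sRefl, hF0 γ hγ.2, mul_zero, sub_zero]
  obtain ⟨G, hG⟩ := h.exists_pos_linearMap
  let Gw : V →ₗ[ℝ] ℝ := G ∘ₗ w.symm.toLinearMap
  have hGwβ : Gw β < 0 := by
    have := hG _ hβ.2
    rw [map_neg] at this
    simpa [Gw] using this
  have hGwγ : 0 < Gw γ := hG _ (symm_apply_mem_pos_of_mem_levi h hw hwP hγ hγpos)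
  refine ⟨hpos, h.neg_mem_pos_of_map_neg (fun δ hδ => (hG δ hδ).le)
    ((apply_mem_iff_of_mem_weylGroup h.refl_mem (inv_mem hw) _).mpr hroot) ?_⟩
  change Gw (sRefl γ β) < 0
  rw [map_sRefl]
  nlinarith

theorem mapsTo_sRefl_inversions_of_mem_pos (h : IsRootBase Φ Δ Φpos) (hΔP : ΔP ⊆ Δ)
    {lam : V} (hdom : ∀ α ∈ Δ, 0 ≤ ⟪lam, coroot α⟫)
    (hw : w ∈ weylGroup Φ) (hwP : inversions Φpos w ∩ levi Φ ΔP = ∅)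
    {ρ : V} (hρ : ρ = (2⁻¹ : ℝ) • ∑ γ ∈ Φpos, γ)
    (hγ : γ ∈ levi Φ ΔP) (hγpos : γ ∈ Φpos) (hμγ : ⟪w (lam + ρ) - ρ, γ⟫ = 0) :
    Set.MapsTo (sRefl γ) (inversions Φpos w) (inversions Φpos w) ∧ ⟪w lam, γ⟫ = 0 := by
  classical
  have hsum := inner_apply_eq_sum_inversionFinset h hw hρ hμγ
  have hnonneg : 0 ≤ ⟪w lam, γ⟫ := by
    rw [← w.apply_symm_apply γ, inner_apply_apply_of_mem_weylGroup hw]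
    exact h.inner_nonneg_of_dominant hdom (symm_apply_mem_pos_of_mem_levi h hw hwP hγ hγpos)
  have hstable : ∀ β ∈ inversionFinset Φpos w, 0 ≤ ⟪β, γ⟫ →
      sRefl γ β ∈ inversionFinset Φpos w := by
    simp only [← mem_coe, coe_inversionFinset]
    intro β hβ hβγ
    rcases hβγ.eq_or_lt with hzero | hpos
    · rwa [sRefl_of_inner_eq_zero hzero.symm]
    · exact sRefl_mem_inversions h hΔP hw hwP hγ hγpos hβ hpos
  have hle := sum_nonpos_of_involutive (sRefl_involutive γ) (inner_sRefl_self γ) hstable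
  refine ⟨?_, by linarith⟩
  rw [← coe_inversionFinset]
  exact mapsTo_of_involutive_of_sum_nonneg (sRefl_involutive γ) (inner_sRefl_self γ) hstable
    (hsum ▸ hnonneg)

theorem sRefl_mem_inversions_iff (h : IsRootBase Φ Δ Φpos) (hΔP : ΔP ⊆ Δ)
    {lam : V} (hdom : ∀ α ∈ Δ, 0 ≤ ⟪lam, coroot α⟫)
    (hw : w ∈ weylGroup Φ) (hwP : inversions Φpos w ∩ levi Φ ΔP = ∅)
    {ρ : V} (hρ : ρ = (2⁻¹ : ℝ) • ∑ γ ∈ Φpos, γ)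
    (hγ : γ ∈ levi Φ ΔP) (hμγ : ⟪w (lam + ρ) - ρ, coroot γ⟫ = 0) :
    (∀ v, sRefl γ v ∈ inversions Φpos w ↔ v ∈ inversions Φpos w) ∧
      sRefl γ (w lam) = w lam := by
  rw [inner_coroot_eq_zero_iff (h.ne_zero_of_mem hγ.1)] at hμγ
  obtain ⟨γ', hγ', hγ'pos, hsRefl, hμγ'⟩ : ∃ γ' ∈ levi Φ ΔP, γ' ∈ Φpos ∧
      sRefl γ' = sRefl γ ∧ ⟪w (lam + ρ) - ρ, γ'⟫ = 0 := by
    rcases h.mem_or_neg_mem γ hγ.1 with hp | hn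
    · exact ⟨γ, hγ, hp, rfl, hμγ⟩
    · refine ⟨-γ, ⟨h.pos_subset hn, Submodule.neg_mem _ hγ.2⟩, hn, funext (sRefl_neg γ), ?_⟩
      rw [inner_neg_right, hμγ, neg_zero]
  obtain ⟨hmaps, hzero⟩ :=
    mapsTo_sRefl_inversions_of_mem_pos h hΔP hdom hw hwP hρ hγ' hγ'pos hμγ'
  rw [← hsRefl]
  refine ⟨fun v => ⟨fun hv => ?_, fun hv => hmaps hv⟩, sRefl_of_inner_eq_zero hzero⟩
  simpa only [sRefl_involutive γ' v] using hmaps hv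

end MinimalCosetReps

open scoped Pointwise in
theorem smul_set_eq_and_smul_eq_of_mem_closure {G α : Type*} [Group G] [MulAction G α]
    {T : Set G} {S : Set α} {x : α} (hT : ∀ u ∈ T, (∀ v, u • v ∈ S ↔ v ∈ S) ∧ u • x = x)
    {s : G} (hs : s ∈ Subgroup.closure T) : s • S = S ∧ s • x = x :=
  (Subgroup.closure_le (MulAction.stabilizer G S ⊓ MulAction.stabilizer G x)).mpr
    (fun u hu => ⟨MulAction.mem_stabilizer_set.mpr (hT u hu).1, (hT u hu).2⟩) hs

theorem cartier_general
    {V : Type*} [NormedAddCommGroup V] [InnerProductSpace ℝ V]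
    (Φ Δ Φpos : Finset V) (h : IsRootBase Φ Δ Φpos)
    (ΔP : Finset V) (hΔP : ΔP ⊆ Δ)
    (lam : V) (hdom : ∀ α ∈ Δ, 0 ≤ ⟪lam, coroot α⟫)
    (w : V ≃ₗ[ℝ] V) (hw : w ∈ minimalCosetReps Φ Φpos ΔP)
    (ρ : V) (hρ : ρ = (2⁻¹ : ℝ) • ∑ γ ∈ Φpos, γ)
    (μ : V) (hμ : μ = w (lam + ρ) - ρ)
    (s : V ≃ₗ[ℝ] V)
    (hs : s ∈ Subgroup.closure {u : V ≃ₗ[ℝ] V |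
        ∃ γ ∈ levi Φ ΔP, ⟪μ, coroot γ⟫ = 0 ∧ ∀ v, u v = sRefl γ v}) :
    (fun v => s v) '' inversions Φpos w = inversions Φpos w ∧ s (w lam) = w lam := by
  subst hμ
  refine smul_set_eq_and_smul_eq_of_mem_closure (fun u hu => ?_) hs
  obtain ⟨γ, hγ, hμγ, hu⟩ := hu
  simp only [LinearEquiv.smul_def, hu]
  exact sRefl_mem_inversions_iff h hΔP hdom hw.1 hw.2 hρ hγ hμγ

/-- equation (eqnCartier) in the proof of the Basic Lemma 16.2.
If `λ` is dominant, `w ∈ W_P`, `μ = w(λ+ρ) − ρ`, and `s` lies in the subgroup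
generated by the reflections in the roots `γ ∈ Φ^P` with `⟨μ, γ∨⟩ = 0`, then
`s(Φ_w) = Φ_w` and `s(wλ) = wλ`. -/
theorem cartier
    {V : Type*} [NormedAddCommGroup V] [InnerProductSpace ℝ V] [FiniteDimensional ℝ V]
    (Φ Δ Φpos : Finset V) (h : IsRootBase Φ Δ Φpos)
    (ΔP : Finset V) (hΔP : ΔP ⊆ Δ)
    (lam : V) (hdom : ∀ α ∈ Δ, 0 ≤ ⟪lam, coroot α⟫)
    (w : V ≃ₗ[ℝ] V) (hw : w ∈ minimalCosetReps Φ Φpos ΔP)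
    (ρ : V) (hρ : ρ = (2⁻¹ : ℝ) • ∑ γ ∈ Φpos, γ)
    (μ : V) (hμ : μ = w (lam + ρ) - ρ)
    (s : V ≃ₗ[ℝ] V)
    (hs : s ∈ Subgroup.closure {u : V ≃ₗ[ℝ] V |
        ∃ γ ∈ levi Φ ΔP, ⟪μ, coroot γ⟫ = 0 ∧ ∀ v, u v = sRefl γ v}) :
    (fun v => s v) '' inversions Φpos w = inversions Φpos w ∧ s (w lam) = w lam :=
  cartier_general Φ Δ Φpos h ΔP hΔP lam hdom w hw ρ hρ μ hμ s hs
end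
end

section
/- Assume the hypotheses (H1) (Υ̃)^ = Υ for every Υ ⊆ Δ_ℚ; (H2) κ(Θ̂) = (κ(Θ))^ for every Θ ⊆ Δ_ℝ; (H3) κ(Θ) = κ(((κ(Θ))^)~) for every Θ ⊆ Δ_ℝ such that ω(Θ) is ℚ-rational; and (GR) ('geometric rationality') ω(Υ̃) is ℚ-rational for every Υ ⊆ Δ_ℚ. Then: (a) (ω(Υ))~ = ω(Υ̃) for every Υ ⊆ Δ_ℚ; and (b) (ω(Θ))^ = ω(Θ̂) for every Θ ⊆ Δ_ℝ such that ω(Θ) is ℚ-rational. -/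
/-!
For symmetric adjacency, `κ(Θ)` is the largest σ-connected subset of `Θ`, and any element of
`ω(Θ)` adjacent to `κ(Θ) ∪ {∗}` can be adjoined to a σ-connected subset of some `Υ` with
`κ(Υ) = κ(Θ)`; walking back from `∗` along a path this gives `κ(ω(Θ)) = κ(Θ)`.

For (b), the inclusion `(ω(Θ))^ ⊆ ω(Θ̂)` is (H2) applied to `Θ` and `ω(Θ)`. Conversely, if
`κ(Υ) = κ(Θ̂)` then (H1) and (H2) give `(κ(Υ̃))^ = (κ(Θ))^`, and (H3), applicable to `Υ̃` by (GR),
upgrades this to `κ(Υ̃) = κ(Θ)`; hence `Υ = (Υ̃)^ ⊆ (ω(Θ))^`. Part (a) is (b) for `Θ = Υ̃`,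
pulled back along `~` using (H1) and that `ω(Υ̃)` is ℚ-rational.
-/

/-- A subset `S` of `α` is connected for the adjacency relation `adj`
if any two of its elements are joined by a path inside `S`. -/
def connAdj {α : Type*} (adj : α → α → Prop) (S : Set α) : Prop :=
  ∀ x ∈ S, ∀ y ∈ S, Relation.ReflTransGen (fun a b => a ∈ S ∧ b ∈ S ∧ adj a b) x y

/-- `Θ` is σ-connected: the induced subgraph on `Θ ∪ {∗}` is connected
(here `∗` is the distinguished extra element, modelled by `none`). -/
def sigmaConn {α : Type*} (adj : Option α → Option α → Prop) (Θ : Set α) : Prop :=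
  connAdj adj (insert none (Option.some '' Θ))

/-- `κ(Θ)`: the union of all σ-connected subsets of `Θ`. -/
def kap {α : Type*} (adj : Option α → Option α → Prop) (Θ : Set α) : Set α :=
  ⋃₀ {Υ : Set α | Υ ⊆ Θ ∧ sigmaConn adj Υ}

/-- `ω(Θ)`: the union of all subsets `Υ` with `κ(Υ) = κ(Θ)`. -/
def om {α : Type*} (adj : Option α → Option α → Prop) (Θ : Set α) : Set α :=
  ⋃₀ {Υ : Set α | kap adj Υ = kap adj Θ}

/-- `Θ̂ = restr(Θ) \ {0}` (with `0` modelled by `none`). -/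
def hatS {R Q : Type*} (restr : R → Option Q) (Θ : Set R) : Set Q :=
  {q | ∃ θ ∈ Θ, restr θ = some q}

/-- `Υ̃ = restr⁻¹(Υ ∪ {0})`. -/
def tildeS {R Q : Type*} (restr : R → Option Q) (Υ : Set Q) : Set R :=
  {θ | restr θ = none ∨ ∃ q ∈ Υ, restr θ = some q}

/-- A subset of `Δ_ℝ` is ℚ-rational if it is of the form `Υ̃` for some `Υ ⊆ Δ_ℚ`. -/
def QRat {R Q : Type*} (restr : R → Option Q) (Θ : Set R) : Prop :=
  ∃ Υ : Set Q, Θ = tildeS restr Υ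

section Connectivity

variable {α : Type*} {adj : α → α → Prop}

theorem reflTransGen_induced_mono {S T : Set α} (hST : S ⊆ T) {x y : α}
    (h : Relation.ReflTransGen (fun p q => p ∈ S ∧ q ∈ S ∧ adj p q) x y) :
    Relation.ReflTransGen (fun p q => p ∈ T ∧ q ∈ T ∧ adj p q) x y :=
  Relation.ReflTransGen.mono (fun _ _ ⟨ha, hb, hab⟩ => ⟨hST ha, hST hb, hab⟩) x y h

theorem connAdj_insert (hadj : Symmetric adj) {S : Set α} {a c : α} (hS : connAdj adj S)
    (hc : c ∈ S) (hac : adj a c) : connAdj adj (insert a S) := by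
  have hsub : S ⊆ insert a S := Set.subset_insert a S
  have to_c : ∀ x ∈ insert a S,
      Relation.ReflTransGen (fun p q => p ∈ insert a S ∧ q ∈ insert a S ∧ adj p q) x c := by
    rintro x (rfl | hx)
    · exact .single ⟨Set.mem_insert x S, hsub hc, hac⟩
    · exact reflTransGen_induced_mono hsub (hS x hx c hc)
  have from_c : ∀ y ∈ insert a S,
      Relation.ReflTransGen (fun p q => p ∈ insert a S ∧ q ∈ insert a S ∧ adj p q) c y := by
    rintro y (rfl | hy)
    · exact .single ⟨hsub hc, Set.mem_insert y S, hadj hac⟩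
    · exact reflTransGen_induced_mono hsub (hS c hc y hy)
  exact fun x hx y hy => (to_c x hx).trans (from_c y hy)

end Connectivity

section KappaOmega

variable {α : Type*} {adj : Option α → Option α → Prop}

theorem kap_mono {Θ Θ' : Set α} (h : Θ ⊆ Θ') : kap adj Θ ⊆ kap adj Θ' :=
  Set.sUnion_subset_sUnion fun _ ⟨hsub, hconn⟩ => ⟨hsub.trans h, hconn⟩

theorem kap_subset (Θ : Set α) : kap adj Θ ⊆ Θ :=
  Set.sUnion_subset fun _ h => h.1

theorem subset_kap_of_sigmaConn {Υ Θ : Set α} (hsub : Υ ⊆ Θ) (hconn : sigmaConn adj Υ) :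
    Υ ⊆ kap adj Θ :=
  Set.subset_sUnion_of_mem ⟨hsub, hconn⟩

theorem sigmaConn_kap (Θ : Set α) : sigmaConn adj (kap adj Θ) := by
  set K := insert none (Option.some '' kap adj Θ)
  have via_star : ∀ x ∈ K,
      Relation.ReflTransGen (fun p q => p ∈ K ∧ q ∈ K ∧ adj p q) x none ∧
      Relation.ReflTransGen (fun p q => p ∈ K ∧ q ∈ K ∧ adj p q) none x := by
    rintro x (rfl | ⟨u, ⟨Υ, ⟨hsub, hconn⟩, hu⟩, rfl⟩)
    · exact ⟨.refl, .refl⟩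
    · have hΥK : insert none (Option.some '' Υ) ⊆ K :=
        Set.insert_subset_insert (Set.image_mono (subset_kap_of_sigmaConn hsub hconn))
      have hu' : some u ∈ insert none (Option.some '' Υ) := Set.mem_insert_of_mem _ ⟨u, hu, rfl⟩
      exact ⟨reflTransGen_induced_mono hΥK (hconn _ hu' _ (Set.mem_insert _ _)),
        reflTransGen_induced_mono hΥK (hconn _ (Set.mem_insert _ _) _ hu')⟩
  exact fun x hx y hy => (via_star x hx).1.trans (via_star y hy).2

theorem sigmaConn_insert (hadj : Symmetric adj) {Υ : Set α} {u : α} {c : Option α}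
    (hΥ : sigmaConn adj Υ) (hc : c ∈ insert none (Option.some '' Υ)) (huc : adj (some u) c) :
    sigmaConn adj (insert u Υ) := by
  unfold sigmaConn
  rw [Set.image_insert_eq, Set.insert_comm]
  exact connAdj_insert hadj hΥ hc huc

theorem subset_om {Θ : Set α} : Θ ⊆ om adj Θ :=
  Set.subset_sUnion_of_mem rfl

theorem subset_om_of_kap_eq {Υ Θ : Set α} (h : kap adj Υ = kap adj Θ) : Υ ⊆ om adj Θ :=
  Set.subset_sUnion_of_mem h

theorem mem_kap_of_mem_om_of_adj (hadj : Symmetric adj) {Θ : Set α} {u : α} {c : Option α}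
    (hu : u ∈ om adj Θ) (hc : c ∈ insert none (Option.some '' kap adj Θ))
    (huc : adj (some u) c) : u ∈ kap adj Θ := by
  obtain ⟨Υ, hκ, huΥ⟩ := hu
  rw [← hκ] at hc ⊢
  exact subset_kap_of_sigmaConn (Set.insert_subset huΥ (kap_subset Υ))
    (sigmaConn_insert hadj (sigmaConn_kap Υ) hc huc) (Set.mem_insert u _)

theorem kap_om (hadj : Symmetric adj) (Θ : Set α) : kap adj (om adj Θ) = kap adj Θ := by
  refine Set.Subset.antisymm ?_ (kap_mono subset_om)
  rintro x ⟨Υ, ⟨hsub, hconn⟩, hx⟩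
  set K := insert none (Option.some '' kap adj Θ)
  have reaches_K : ∀ a, Relation.ReflTransGen
      (fun p q => p ∈ insert none (Option.some '' Υ) ∧ q ∈ insert none (Option.some '' Υ) ∧
        adj p q) a none → a ∈ K := by
    intro a h
    induction h using Relation.ReflTransGen.head_induction_on with
    | refl => exact Set.mem_insert _ _
    | head hac _ hcK =>
      obtain ⟨rfl | ⟨u, hu, rfl⟩, -, huc⟩ := hac
      · exact Set.mem_insert _ _
      · exact Set.mem_insert_of_mem _ ⟨u, mem_kap_of_mem_om_of_adj hadj (hsub hu) hcK huc, rfl⟩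
  have hxK := reaches_K _ (hconn _ (Set.mem_insert_of_mem _ ⟨x, hx, rfl⟩) _ (Set.mem_insert _ _))
  simpa [K] using hxK

end KappaOmega

theorem hatS_mono {R Q : Type*} {restr : R → Option Q} {Θ Θ' : Set R} (h : Θ ⊆ Θ') :
    hatS restr Θ ⊆ hatS restr Θ' :=
  fun _ ⟨θ, hθ, he⟩ => ⟨θ, h hθ, he⟩

theorem geometricRationality_general
    {R Q : Type*}
    (adjR : Option R → Option R → Prop) (hadjR : Symmetric adjR)
    (adjQ : Option Q → Option Q → Prop)
    (restr : R → Option Q)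
    (H1 : ∀ Υ : Set Q, hatS restr (tildeS restr Υ) = Υ)
    (H2 : ∀ Θ : Set R, kap adjQ (hatS restr Θ) = hatS restr (kap adjR Θ))
    (H3 : ∀ Θ : Set R, QRat restr (om adjR Θ) →
      kap adjR Θ = kap adjR (tildeS restr (hatS restr (kap adjR Θ))))
    (GR : ∀ Υ : Set Q, QRat restr (om adjR (tildeS restr Υ))) :
    (∀ Υ : Set Q, tildeS restr (om adjQ Υ) = om adjR (tildeS restr Υ)) ∧
    (∀ Θ : Set R, QRat restr (om adjR Θ) →
      hatS restr (om adjR Θ) = om adjQ (hatS restr Θ)) := by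
  have hat_om : ∀ Θ : Set R, QRat restr (om adjR Θ) →
      hatS restr (om adjR Θ) = om adjQ (hatS restr Θ) := by
    intro Θ hΘ
    refine Set.Subset.antisymm (subset_om_of_kap_eq ?_) ?_
    · rw [H2, H2, kap_om hadjR]
    · rintro q ⟨Υ, hκ, hq⟩
      have hat_kap : hatS restr (kap adjR (tildeS restr Υ)) = hatS restr (kap adjR Θ) := by
        rw [← H2, ← H2, H1, hκ]
      have kap_tilde : kap adjR (tildeS restr Υ) = kap adjR Θ := by
        rw [H3 _ (GR Υ), H3 Θ hΘ, hat_kap]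
      rw [← H1 Υ] at hq
      exact hatS_mono (subset_om_of_kap_eq kap_tilde) hq
  refine ⟨fun Υ => ?_, hat_om⟩
  obtain ⟨Υ', hΥ'⟩ := GR Υ
  have hom := hat_om _ (GR Υ)
  rw [H1, hΥ', H1] at hom
  rw [← hom, hΥ']

/-- Lemma 17.4 of the paper, combinatorial content.
Under hypotheses (H1), (H2), (H3) and geometric rationality (GR):
(a) `(ω(Υ))~ = ω(Υ̃)` for every `Υ ⊆ Δ_ℚ`; and
(b) `(ω(Θ))^ = ω(Θ̂)` for every `Θ ⊆ Δ_ℝ` such that `ω(Θ)` is ℚ-rational. -/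
theorem geometricRationality
    {R Q : Type*} [Finite R] [Finite Q]
    (adjR : Option R → Option R → Prop) (hadjR : Symmetric adjR)
    (adjQ : Option Q → Option Q → Prop) (hadjQ : Symmetric adjQ)
    (restr : R → Option Q)
    (H1 : ∀ Υ : Set Q, hatS restr (tildeS restr Υ) = Υ)
    (H2 : ∀ Θ : Set R, kap adjQ (hatS restr Θ) = hatS restr (kap adjR Θ))
    (H3 : ∀ Θ : Set R, QRat restr (om adjR Θ) →
      kap adjR Θ = kap adjR (tildeS restr (hatS restr (kap adjR Θ))))
    (GR : ∀ Υ : Set Q, QRat restr (om adjR (tildeS restr Υ))) :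
    (∀ Υ : Set Q, tildeS restr (om adjQ Υ) = om adjR (tildeS restr Υ)) ∧
    (∀ Θ : Set R, QRat restr (om adjR Θ) →
      hatS restr (om adjR Θ) = om adjQ (hatS restr Θ)) :=
  geometricRationality_general adjR hadjR adjQ restr H1 H2 H3 GR
end
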